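/- Let w : L → ℝ, let ℓ* ∈ L be a light instance with w(ℓ*) ≥ 0, and let w₁ be the decomposed weight determined by w and ℓ*. Let S ⊆ L be a feasible subset with ℓ* ∉ S such that S ∪ {ℓ*} violates a resource constraint at es(ℓ*), i.e., ∑_{ℓ ∈ S∪{ℓ*}, es(ℓ)=es(ℓ*)} b̃(ℓ) > 1 or ∑_{ℓ ∈ S∪{ℓ*}, es(ℓ)=es(ℓ*)} c̃(ℓ) > 1. Then w₁(S) ≥ (1/2)·w(ℓ*). -/
import Mathlib


/-- A subset `S` of the set of assignment instances is feasible if, at every edge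
server, the total normalized bandwidth and computation demands are at most `1`,
and each job has at most one instance selected. -/
def Feasible {L J K : Type*} [DecidableEq L] [DecidableEq J] [DecidableEq K]
    (b c : L → ℝ) (job : L → J) (es : L → K) (S : Finset L) : Prop :=
  (∀ k : K, ∑ ℓ ∈ S.filter (fun ℓ => es ℓ = k), b ℓ ≤ 1) ∧
  (∀ k : K, ∑ ℓ ∈ S.filter (fun ℓ => es ℓ = k), c ℓ ≤ 1) ∧
  (∀ j : J, (S.filter (fun ℓ => job ℓ = j)).card ≤ 1)

/-- An instance is light if both its normalized demands are at most `1/2`. -/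
def Light {L : Type*} (b c : L → ℝ) (ℓ : L) : Prop :=
  b ℓ ≤ 1 / 2 ∧ c ℓ ≤ 1 / 2

/-- The decomposed weight `w₁` determined by a weight function `w` and a fixed
instance `ℓstar`. -/
def decompose {L J K : Type*} [DecidableEq J] [DecidableEq K]
    (b c : L → ℝ) (job : L → J) (es : L → K) (w : L → ℝ) (ℓstar : L) (ℓ : L) : ℝ :=
  if job ℓ = job ℓstar then w ℓstar
  else if es ℓ = es ℓstar then w ℓstar * (b ℓ + c ℓ)
  else 0

/-- If `ℓ*` is light with `w(ℓ*) ≥ 0`, `S` is feasible with `ℓ* ∉ S`,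
and adding `ℓ*` to `S` violates a resource constraint at `es(ℓ*)`, then
`w₁(S) ≥ (1/2)·w(ℓ*)`. -/
theorem decompose_sum_ge_half_of_light
    {L J K : Type*} [Fintype L] [DecidableEq L] [Fintype J] [DecidableEq J]
    [Fintype K] [DecidableEq K]
    (b c : L → ℝ) (job : L → J) (es : L → K)
    (hb : ∀ ℓ : L, 0 < b ℓ ∧ b ℓ ≤ 1) (hc : ∀ ℓ : L, 0 < c ℓ ∧ c ℓ ≤ 1)
    (w : L → ℝ) (ℓstar : L) (hlight : Light b c ℓstar) (hw : 0 ≤ w ℓstar)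
    (S : Finset L) (hS : Feasible b c job es S) (hnotmem : ℓstar ∉ S)
    (hviol :
      1 < ∑ ℓ ∈ (insert ℓstar S).filter (fun ℓ => es ℓ = es ℓstar), b ℓ ∨
      1 < ∑ ℓ ∈ (insert ℓstar S).filter (fun ℓ => es ℓ = es ℓstar), c ℓ) :
    (1 / 2) * w ℓstar ≤ ∑ ℓ ∈ S, decompose b c job es w ℓstar ℓ := by

  obtain ⟨hlb, hlc⟩ := hlight
  set T := S.filter (fun ℓ => es ℓ = es ℓstar) with hT
  have hnonneg : ∀ ℓ ∈ S, 0 ≤ decompose b c job es w ℓstar ℓ := by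
    intro ℓ _
    unfold decompose
    split_ifs with h1 h2
    · exact hw
    · exact mul_nonneg hw (by linarith [(hb ℓ).1, (hc ℓ).1])
    · exact le_refl 0
  have hsub : ∑ ℓ ∈ T, decompose b c job es w ℓstar ℓ ≤
      ∑ ℓ ∈ S, decompose b c job es w ℓstar ℓ :=
    Finset.sum_le_sum_of_subset_of_nonneg (Finset.filter_subset _ _)
      (fun ℓ h _ => hnonneg ℓ h)
  have hfi : (insert ℓstar S).filter (fun ℓ => es ℓ = es ℓstar) = insert ℓstar T := by
    rw [Finset.filter_insert, if_pos rfl]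
  have hnotT : ℓstar ∉ T := fun h => hnotmem (Finset.mem_filter.mp h).1
  have hkeyb : ∀ ℓ ∈ T, w ℓstar * b ℓ ≤ decompose b c job es w ℓstar ℓ := by
    intro ℓ hℓ
    have hes : es ℓ = es ℓstar := (Finset.mem_filter.mp hℓ).2
    unfold decompose
    split_ifs with h1
    · nlinarith [(hb ℓ).1, (hb ℓ).2]
    · nlinarith [(hc ℓ).1]
  have hkeyc : ∀ ℓ ∈ T, w ℓstar * c ℓ ≤ decompose b c job es w ℓstar ℓ := by
    intro ℓ hℓ
    have hes : es ℓ = es ℓstar := (Finset.mem_filter.mp hℓ).2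
    unfold decompose
    split_ifs with h1
    · nlinarith [(hc ℓ).1, (hc ℓ).2]
    · nlinarith [(hb ℓ).1]
  rcases hviol with hv | hv
  · rw [hfi, Finset.sum_insert hnotT] at hv
    have h2 : 1 / 2 ≤ ∑ ℓ ∈ T, b ℓ := by linarith
    calc (1 / 2) * w ℓstar ≤ (∑ ℓ ∈ T, b ℓ) * w ℓstar := by nlinarith
      _ = ∑ ℓ ∈ T, w ℓstar * b ℓ := by rw [Finset.sum_mul]; exact Finset.sum_congr rfl (fun ℓ _ => mul_comm _ _)
      _ ≤ ∑ ℓ ∈ T, decompose b c job es w ℓstar ℓ := Finset.sum_le_sum hkeyb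
      _ ≤ _ := hsub
  · rw [hfi, Finset.sum_insert hnotT] at hv
    have h2 : 1 / 2 ≤ ∑ ℓ ∈ T, c ℓ := by linarith
    calc (1 / 2) * w ℓstar ≤ (∑ ℓ ∈ T, c ℓ) * w ℓstar := by nlinarith
      _ = ∑ ℓ ∈ T, w ℓstar * c ℓ := by rw [Finset.sum_mul]; exact Finset.sum_congr rfl (fun ℓ _ => mul_comm _ _)
      _ ≤ ∑ ℓ ∈ T, decompose b c job es w ℓstar ℓ := Finset.sum_le_sum hkeyc
      _ ≤ _ := hsub
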